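/- arXiv:1710.00797 — 2 statements merged into one kernel-verified Lean document; each statement's English description precedes it below -/
import Mathlib

section
/- Let f : ℝⁿ → ℝ be differentiable with a global minimizer x*. If f is 1-weakly-quasi-convex with respect to x*, i.e., f(x) − f(x*) ≤ ⟨∇f(x), x − x*⟩ for all x, then f is star-convex with respect to x*, i.e., f(λx* + (1−λ)x) ≤ λf(x*) + (1−λ)f(x) for all x ∈ ℝⁿ and all λ ∈ [0,1]. -/
/-!
Restrict `f` to the ray `g t = f (x* + t • (x - x*))`. Weak quasi-convexity says
`g t - g 0 ≤ t * g' t` for `t > 0`, which is exactly the nonnegativity of the derivative of the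
secant slope `(g t - g 0) / t`. Hence this slope is monotone for `t > 0`, so
`g t - g 0 ≤ t * (g 1 - g 0)`, which is star convexity along the segment from `x*` to `x`.
-/

open Set
open scoped RealInnerProductSpace Gradient

section SecantSlope

variable {g g' : ℝ → ℝ}

theorem hasDerivAt_slope_zero {t : ℝ} (ht : t ≠ 0) (hg : HasDerivAt g (g' t) t) :
    HasDerivAt (slope g 0) ((t * g' t - (g t - g 0)) / t ^ 2) t := by
  have hslope : slope g 0 = fun s => s⁻¹ * (g s - g 0) := by
    ext s
    simp only [slope, sub_zero, vsub_eq_sub, smul_eq_mul]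
  rw [hslope]
  refine ((hasDerivAt_inv ht).mul (hg.sub_const (g 0))).congr_deriv ?_
  field_simp
  ring

theorem monotoneOn_slope_zero_of_sub_le_mul_deriv
    (hg : ∀ t > 0, HasDerivAt g (g' t) t) (hle : ∀ t > 0, g t - g 0 ≤ t * g' t) :
    MonotoneOn (slope g 0) (Ioi 0) := by
  have hslope : ∀ t ∈ Ioi (0 : ℝ),
      HasDerivAt (slope g 0) ((t * g' t - (g t - g 0)) / t ^ 2) t :=
    fun t ht => hasDerivAt_slope_zero (ne_of_gt ht) (hg t ht)
  refine monotoneOn_of_hasDerivWithinAt_nonneg (f' := fun t => (t * g' t - (g t - g 0)) / t ^ 2)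
    (convex_Ioi 0)
    (fun t ht => (hslope t ht).continuousAt.continuousWithinAt) ?_ ?_
  · rw [interior_Ioi]
    exact fun t ht => (hslope t ht).hasDerivWithinAt
  · rw [interior_Ioi]
    exact fun t ht => div_nonneg (sub_nonneg.mpr (hle t ht)) (sq_nonneg t)

theorem sub_le_mul_sub_of_sub_le_mul_deriv
    (hg : ∀ t > 0, HasDerivAt g (g' t) t) (hle : ∀ t > 0, g t - g 0 ≤ t * g' t)
    {t : ℝ} (ht : t ∈ Icc (0 : ℝ) 1) : g t - g 0 ≤ t * (g 1 - g 0) := by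
  rcases ht.1.eq_or_lt with rfl | ht0
  · simp
  have hmono := monotoneOn_slope_zero_of_sub_le_mul_deriv hg hle ht0 (mem_Ioi.mpr one_pos) ht.2
  rw [slope_def_field, slope_def_field, sub_zero, sub_zero, div_one, div_le_iff₀ ht0] at hmono
  linarith

end SecantSlope

theorem HasGradientAt.hasDerivAt_comp_add_smul {E : Type*} [NormedAddCommGroup E]
    [InnerProductSpace ℝ E] [CompleteSpace E] {f : E → ℝ} {f' x₀ v : E} {t : ℝ}
    (hf : HasGradientAt f f' (x₀ + t • v)) :
    HasDerivAt (fun s : ℝ => f (x₀ + s • v)) ⟪f', v⟫ t := by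
  have hline : HasDerivAt (fun s : ℝ => x₀ + s • v) v t := by
    simpa using ((hasDerivAt_id t).smul_const v).const_add x₀
  have h := hf.hasFDerivAt.comp_hasDerivAt t hline
  rwa [InnerProductSpace.toDual_apply_apply] at h

theorem one_wqc_implies_star_convex_general
    (n : ℕ) (f : EuclideanSpace ℝ (Fin n) → ℝ)
    (hdiff : Differentiable ℝ f)
    (xstar : EuclideanSpace ℝ (Fin n))
    (hwqc : ∀ x, f x - f xstar ≤ ⟪gradient f x, x - xstar⟫) :
    ∀ (x : EuclideanSpace ℝ (Fin n)) (lam : ℝ), lam ∈ Set.Icc (0 : ℝ) 1 →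
      f (lam • xstar + (1 - lam) • x) ≤ lam * f xstar + (1 - lam) * f x := by
  intro x lam hlam
  set g : ℝ → ℝ := fun t => f (xstar + t • (x - xstar))
  have hderiv : ∀ t > 0, HasDerivAt g ⟪∇ f (xstar + t • (x - xstar)), x - xstar⟫ t :=
    fun t _ => (hdiff _).hasGradientAt.hasDerivAt_comp_add_smul
  have hle : ∀ t > 0, g t - g 0 ≤ t * ⟪∇ f (xstar + t • (x - xstar)), x - xstar⟫ := by
    intro t _
    simpa [g, real_inner_smul_right] using hwqc (xstar + t • (x - xstar))
  have hsec := sub_le_mul_sub_of_sub_le_mul_deriv hderiv hle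
    (t := 1 - lam) ⟨by linarith [hlam.2], by linarith [hlam.1]⟩
  have hpoint : xstar + (1 - lam) • (x - xstar) = lam • xstar + (1 - lam) • x := by module
  simp only [g, hpoint, zero_smul, add_zero, one_smul, add_sub_cancel] at hsec
  linarith

theorem one_wqc_implies_star_convex
    (n : ℕ) (f : EuclideanSpace ℝ (Fin n) → ℝ)
    (hdiff : Differentiable ℝ f)
    (xstar : EuclideanSpace ℝ (Fin n))
    (hmin : ∀ x, f xstar ≤ f x)
    (hwqc : ∀ x, f x - f xstar ≤ ⟪gradient f x, x - xstar⟫) :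
    ∀ (x : EuclideanSpace ℝ (Fin n)) (lam : ℝ), lam ∈ Set.Icc (0 : ℝ) 1 →
      f (lam • xstar + (1 - lam) • x) ≤ lam * f xstar + (1 - lam) * f x :=
  one_wqc_implies_star_convex_general n f hdiff xstar hwqc
end

section
/- Let f : ℝⁿ → ℝ be differentiable and L-smooth, let x* be a global minimizer of f with f* = f(x*), and suppose f is α-weakly-quasi-convex with respect to x* with constant α ∈ (0,1]. Define weights ω_0 = 1 and ω_k = 1/2 + √(1/4 + ω_{k−1}²) for k ≥ 1. Let (x_k) be a sequence starting from x_0 such that for each k ≥ 0, x_{k+1} is a global minimizer of f over the affine subspace x_k + span{∇f(x_k), x_k − x_0, Σ_{i=0}^{k} ω_i ∇f(x_i)} (the SESOP iteration). Then for every natural number k ≥ 1, f(x_k) − f* ≤ 2·L·R²/(α²·k²), where R = ‖x_0 − x*‖. -/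
/-!
Exact minimization over the subspace makes `∇f(x_{k+1})` orthogonal to `x_{k+1} - x_0` and to
`S_k = ∑_{i ≤ k} ω_i ∇f(x_i)`. The first orthogonality turns weak quasi-convexity into
`α (f(x_i) - f*) ≤ ⟪∇f(x_i), x_0 - x*⟫`, hence `α ∑ ω_i (f(x_i) - f*) ≤ ‖S_k‖ R`. The second makes
`‖S_k‖² = ∑ ω_i² ‖∇f(x_i)‖²`; bounding each term by the gradient step,
`‖∇f(x_i)‖² ≤ 2L (f(x_i) - f(x_{i+1}))`, and summing by parts with `ω_{i+1}² = ω_{i+1} + ω_i²` gives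
`‖S_k‖² ≤ 2L (∑ ω_i (f(x_i) - f*) - ω_k² (f(x_{k+1}) - f*))`. Eliminating `‖S_k‖` yields
`2 α² ω_k² (f(x_{k+1}) - f*) ≤ L R²`, and `ω_k ≥ (k + 2) / 2`.
-/

open scoped RealInnerProductSpace Gradient
open Finset

section Smooth

variable {E : Type*} [NormedAddCommGroup E] [InnerProductSpace ℝ E] [CompleteSpace E]
  {f : E → ℝ}

theorem hasDerivAt_comp_add_smul {p d : E} {t : ℝ} (hf : DifferentiableAt ℝ f (p + t • d)) :
    HasDerivAt (fun s : ℝ => f (p + s • d)) ⟪∇ f (p + t • d), d⟫ t := by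
  have hline : HasDerivAt (fun s : ℝ => p + s • d) d t := by
    simpa using ((hasDerivAt_id t).smul_const d).const_add p
  simpa [Function.comp_def] using hf.hasGradientAt.hasFDerivAt.comp_hasDerivAt t hline

theorem inner_gradient_eq_zero_of_forall_le_add_smul {p d : E} (hf : DifferentiableAt ℝ f p)
    (hmin : ∀ t : ℝ, f p ≤ f (p + t • d)) : ⟪∇ f p, d⟫ = 0 := by
  have hderiv := hasDerivAt_comp_add_smul (p := p) (d := d) (t := 0) (by simpa using hf)
  have hloc : IsLocalMin (fun s : ℝ => f (p + s • d)) 0 :=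
    Filter.Eventually.of_forall fun t => by simpa using hmin t
  simpa using hloc.hasDerivAt_eq_zero hderiv

theorem le_add_inner_gradient_add_sq_of_lipschitz_gradient (hdiff : Differentiable ℝ f) {L : ℝ}
    (hsmooth : ∀ x y : E, ‖∇ f y - ∇ f x‖ ≤ L * ‖y - x‖) (x v : E) :
    f (x + v) ≤ f x + ⟪∇ f x, v⟫ + L / 2 * ‖v‖ ^ 2 := by
  have hg (t : ℝ) := hasDerivAt_comp_add_smul (p := x) (d := v) (t := t) (hdiff _)
  have hB (t : ℝ) : HasDerivAt (fun s : ℝ => f x + s * ⟪∇ f x, v⟫ + L / 2 * s ^ 2 * ‖v‖ ^ 2)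
      (⟪∇ f x, v⟫ + L * t * ‖v‖ ^ 2) t := by
    refine ((((hasDerivAt_id t).mul_const ⟪∇ f x, v⟫).const_add (f x)).add
      (((hasDerivAt_pow 2 t).const_mul (L / 2)).mul_const (‖v‖ ^ 2))).congr_deriv ?_
    ring
  have hslope (t : ℝ) (ht : t ∈ Set.Ico (0 : ℝ) 1) :
      ⟪∇ f (x + t • v), v⟫ ≤ ⟪∇ f x, v⟫ + L * t * ‖v‖ ^ 2 := by
    have hlip : ‖∇ f (x + t • v) - ∇ f x‖ ≤ L * (t * ‖v‖) := by
      simpa [norm_smul, abs_of_nonneg ht.1] using hsmooth x (x + t • v)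
    calc ⟪∇ f (x + t • v), v⟫ = ⟪∇ f x, v⟫ + ⟪∇ f (x + t • v) - ∇ f x, v⟫ := by
          rw [inner_sub_left]; ring
      _ ≤ ⟪∇ f x, v⟫ + ‖∇ f (x + t • v) - ∇ f x‖ * ‖v‖ := by
          gcongr; exact real_inner_le_norm _ _
      _ ≤ ⟪∇ f x, v⟫ + L * (t * ‖v‖) * ‖v‖ := by gcongr
      _ = ⟪∇ f x, v⟫ + L * t * ‖v‖ ^ 2 := by ring
  have := image_le_of_deriv_right_le_deriv_boundary
    (fun t _ => (hg t).continuousAt.continuousWithinAt) (fun t _ => (hg t).hasDerivWithinAt)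
    (by simp) (fun t _ => (hB t).continuousAt.continuousWithinAt)
    (fun t _ => (hB t).hasDerivWithinAt) hslope (Set.right_mem_Icc.2 zero_le_one)
  simpa using this

theorem sq_norm_gradient_le_of_lipschitz_gradient (hdiff : Differentiable ℝ f) {L : ℝ}
    (hL : 0 < L) (hsmooth : ∀ x y : E, ‖∇ f y - ∇ f x‖ ≤ L * ‖y - x‖) (x : E) :
    ‖∇ f x‖ ^ 2 ≤ 2 * L * (f x - f (x + (-L⁻¹) • ∇ f x)) := by
  have := le_add_inner_gradient_add_sq_of_lipschitz_gradient hdiff hsmooth x ((-L⁻¹) • ∇ f x)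
  rw [inner_smul_right, real_inner_self_eq_norm_sq, norm_smul, Real.norm_eq_abs, abs_neg,
    abs_of_pos (inv_pos.2 hL)] at this
  have hL' : L ≠ 0 := hL.ne'
  field_simp at this ⊢
  nlinarith

end Smooth

theorem sq_half_add_sqrt_quarter_add_sq (a : ℝ) :
    (1 / 2 + √(1 / 4 + a ^ 2)) ^ 2 = (1 / 2 + √(1 / 4 + a ^ 2)) + a ^ 2 := by
  have := Real.sq_sqrt (show 0 ≤ 1 / 4 + a ^ 2 by positivity)
  linear_combination this

theorem add_half_le_half_add_sqrt_quarter_add_sq (a : ℝ) :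
    a + 1 / 2 ≤ 1 / 2 + √(1 / 4 + a ^ 2) := by
  have := (le_abs_self a).trans (Real.abs_le_sqrt (show a ^ 2 ≤ 1 / 4 + a ^ 2 by linarith))
  linarith

theorem half_add_one_le_of_eq_half_add_sqrt {ω : ℕ → ℝ} (hω0 : ω 0 = 1)
    (hωrec : ∀ k, ω (k + 1) = 1 / 2 + √(1 / 4 + ω k ^ 2)) (k : ℕ) : (k + 2) / 2 ≤ ω k := by
  induction k with
  | zero => simp [hω0]
  | succ k ih =>
    rw [hωrec]
    push_cast
    linarith [add_half_le_half_add_sqrt_quarter_add_sq (ω k)]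

theorem sum_range_sq_mul_sub_eq {w d : ℕ → ℝ} (hw0 : w 0 ^ 2 = w 0)
    (hw : ∀ i, w (i + 1) ^ 2 = w (i + 1) + w i ^ 2) (k : ℕ) :
    ∑ i ∈ range (k + 1), w i ^ 2 * (d i - d (i + 1))
      = ∑ i ∈ range (k + 1), w i * d i - w k ^ 2 * d (k + 1) := by
  induction k with
  | zero => rw [sum_range_one, sum_range_one, hw0]; ring
  | succ k ih =>
    rw [sum_range_succ, ih, sum_range_succ _ (k + 1), hw]
    ring

theorem norm_sum_range_sq_of_inner_sum_eq_zero {E : Type*} [NormedAddCommGroup E]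
    [InnerProductSpace ℝ E] {v : ℕ → E} (hv : ∀ k, ⟪∑ i ∈ range k, v i, v k⟫ = 0) (k : ℕ) :
    ‖∑ i ∈ range k, v i‖ ^ 2 = ∑ i ∈ range k, ‖v i‖ ^ 2 := by
  induction k with
  | zero => simp
  | succ k ih => rw [sum_range_succ, sum_range_succ, norm_add_sq_real, hv, ih]; ring

section SESOP

variable {E : Type*} [NormedAddCommGroup E] [InnerProductSpace ℝ E] [CompleteSpace E]
  {f : E → ℝ} {ω : ℕ → ℝ} {x : ℕ → E}

/-- `x (k + 1)` lies in, and minimizes `f` over, the affine subspace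
`x k + span {∇f (x k), x k - x 0, ∑ i ≤ k, ω i • ∇f (x i)}`. -/
structure IsSESOPSequence (f : E → ℝ) (ω : ℕ → ℝ) (x : ℕ → E) : Prop where
  exists_eq : ∀ k, ∃ a b c : ℝ, x (k + 1) = x k + a • ∇ f (x k) + b • (x k - x 0)
    + c • ∑ i ∈ range (k + 1), ω i • ∇ f (x i)
  le : ∀ (k : ℕ) (a b c : ℝ), f (x (k + 1)) ≤ f (x k + a • ∇ f (x k) + b • (x k - x 0)
    + c • ∑ i ∈ range (k + 1), ω i • ∇ f (x i))

namespace IsSESOPSequence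

theorem inner_gradient_succ_eq_zero (hx : IsSESOPSequence f ω x) (hdiff : Differentiable ℝ f)
    (k : ℕ) (a b c : ℝ) :
    ⟪∇ f (x (k + 1)), a • ∇ f (x k) + b • (x k - x 0)
      + c • ∑ i ∈ range (k + 1), ω i • ∇ f (x i)⟫ = 0 := by
  obtain ⟨a₀, b₀, c₀, hstep⟩ := hx.exists_eq k
  refine inner_gradient_eq_zero_of_forall_le_add_smul (hdiff _) fun t => ?_
  convert hx.le k (a₀ + t * a) (b₀ + t * b) (c₀ + t * c) using 2
  rw [hstep]
  module

theorem inner_sum_gradient_succ_eq_zero (hx : IsSESOPSequence f ω x)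
    (hdiff : Differentiable ℝ f) (k : ℕ) :
    ⟪∑ i ∈ range (k + 1), ω i • ∇ f (x i), ∇ f (x (k + 1))⟫ = 0 := by
  simpa [real_inner_comm] using hx.inner_gradient_succ_eq_zero hdiff k 0 0 1

theorem inner_gradient_succ_sub_start_eq_zero (hx : IsSESOPSequence f ω x)
    (hdiff : Differentiable ℝ f) (k : ℕ) : ⟪∇ f (x (k + 1)), x (k + 1) - x 0⟫ = 0 := by
  obtain ⟨a, b, c, hstep⟩ := hx.exists_eq k
  convert hx.inner_gradient_succ_eq_zero hdiff k a (b + 1) c using 2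
  rw [hstep]
  module

theorem norm_sum_gradient_sq (hx : IsSESOPSequence f ω x) (hdiff : Differentiable ℝ f) (k : ℕ) :
    ‖∑ i ∈ range k, ω i • ∇ f (x i)‖ ^ 2 = ∑ i ∈ range k, ω i ^ 2 * ‖∇ f (x i)‖ ^ 2 := by
  rw [norm_sum_range_sq_of_inner_sum_eq_zero]
  · simp only [norm_smul, mul_pow, Real.norm_eq_abs, sq_abs]
  · rintro (_ | k)
    · simp
    · rw [inner_smul_right, hx.inner_sum_gradient_succ_eq_zero hdiff, mul_zero]

theorem sq_norm_gradient_le (hx : IsSESOPSequence f ω x) (hdiff : Differentiable ℝ f) {L : ℝ}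
    (hL : 0 < L) (hsmooth : ∀ x y : E, ‖∇ f y - ∇ f x‖ ≤ L * ‖y - x‖) (k : ℕ) :
    ‖∇ f (x k)‖ ^ 2 ≤ 2 * L * (f (x k) - f (x (k + 1))) := by
  have hstep := hx.le k (-L⁻¹) 0 0
  simp only [zero_smul, add_zero] at hstep
  nlinarith [sq_norm_gradient_le_of_lipschitz_gradient hdiff hL hsmooth (x k)]

theorem mul_sub_le_inner_gradient (hx : IsSESOPSequence f ω x) (hdiff : Differentiable ℝ f)
    {α : ℝ} {xstar : E} (hwqc : ∀ y, α * (f y - f xstar) ≤ ⟪∇ f y, y - xstar⟫) (k : ℕ) :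
    α * (f (x k) - f xstar) ≤ ⟪∇ f (x k), x 0 - xstar⟫ := by
  cases k with
  | zero => exact hwqc (x 0)
  | succ k =>
    have hsplit : x (k + 1) - xstar = (x (k + 1) - x 0) + (x 0 - xstar) := by abel
    have := hwqc (x (k + 1))
    rwa [hsplit, inner_add_right, hx.inner_gradient_succ_sub_start_eq_zero hdiff k,
      zero_add] at this

theorem two_mul_sq_mul_sq_mul_sub_le (hx : IsSESOPSequence f ω x)
    (hdiff : Differentiable ℝ f) {L : ℝ} (hL : 0 < L)
    (hsmooth : ∀ x y : E, ‖∇ f y - ∇ f x‖ ≤ L * ‖y - x‖) {α : ℝ} (hα : 0 < α)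
    {xstar : E} (hwqc : ∀ y, α * (f y - f xstar) ≤ ⟪∇ f y, y - xstar⟫) (hω0 : ω 0 = 1)
    (hωrec : ∀ k, ω (k + 1) = 1 / 2 + √(1 / 4 + ω k ^ 2)) (k : ℕ) :
    2 * α ^ 2 * ω k ^ 2 * (f (x (k + 1)) - f xstar) ≤ L * ‖x 0 - xstar‖ ^ 2 := by
  set δ : ℕ → ℝ := fun i => f (x i) - f xstar
  set A := ∑ i ∈ range (k + 1), ω i * δ i
  set S := ∑ i ∈ range (k + 1), ω i • ∇ f (x i)
  have hω_nonneg (i : ℕ) : 0 ≤ ω i :=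
    le_trans (by positivity) (half_add_one_le_of_eq_half_add_sqrt hω0 hωrec i)
  have hA : α * A ≤ ‖S‖ * ‖x 0 - xstar‖ :=
    calc α * A = ∑ i ∈ range (k + 1), ω i * (α * δ i) := by
          rw [mul_sum]; exact sum_congr rfl fun i _ => by ring
      _ ≤ ∑ i ∈ range (k + 1), ω i * ⟪∇ f (x i), x 0 - xstar⟫ := by
          gcongr with i
          · exact hω_nonneg i
          · exact hx.mul_sub_le_inner_gradient hdiff hwqc i
      _ = ⟪S, x 0 - xstar⟫ := by simp only [S, sum_inner, inner_smul_left]; rfl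
      _ ≤ ‖S‖ * ‖x 0 - xstar‖ := real_inner_le_norm _ _
  have hS : ‖S‖ ^ 2 ≤ 2 * L * (A - ω k ^ 2 * δ (k + 1)) :=
    calc ‖S‖ ^ 2 = ∑ i ∈ range (k + 1), ω i ^ 2 * ‖∇ f (x i)‖ ^ 2 :=
          hx.norm_sum_gradient_sq hdiff (k + 1)
      _ ≤ ∑ i ∈ range (k + 1), ω i ^ 2 * (2 * L * (δ i - δ (i + 1))) := by
          gcongr with i
          simpa only [δ, sub_sub_sub_cancel_right] using
            hx.sq_norm_gradient_le hdiff hL hsmooth i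
      _ = 2 * L * ∑ i ∈ range (k + 1), ω i ^ 2 * (δ i - δ (i + 1)) := by
          rw [mul_sum]; exact sum_congr rfl fun i _ => by ring
      _ = 2 * L * (A - ω k ^ 2 * δ (k + 1)) := by
          rw [sum_range_sq_mul_sub_eq (by simp [hω0]) (fun i => hωrec i ▸
            sq_half_add_sqrt_quarter_add_sq (ω i))]
  -- Eliminate `‖S‖` between `hA` and `hS`: `2 α ‖S‖ R L - α² ‖S‖² ≤ L² R²`.
  nlinarith [sq_nonneg (α * ‖S‖ - L * ‖x 0 - xstar‖), mul_le_mul_of_nonneg_left hA hα.le]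

end IsSESOPSequence

end SESOP

theorem sesop_convergence_general
    (n : ℕ) (f : EuclideanSpace ℝ (Fin n) → ℝ)
    (hdiff : Differentiable ℝ f)
    (L : ℝ) (hL : 0 < L)
    (hsmooth : ∀ x y : EuclideanSpace ℝ (Fin n),
      ‖gradient f y - gradient f x‖ ≤ L * ‖y - x‖)
    (xstar : EuclideanSpace ℝ (Fin n))
    (α : ℝ) (hα : α ∈ Set.Ioc (0 : ℝ) 1)
    (hwqc : ∀ x, α * (f x - f xstar) ≤ ⟪gradient f x, x - xstar⟫)
    (ω : ℕ → ℝ)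
    (hω0 : ω 0 = 1)
    (hωrec : ∀ k : ℕ, ω (k + 1) = 1 / 2 + Real.sqrt (1 / 4 + ω k ^ 2))
    (x : ℕ → EuclideanSpace ℝ (Fin n))
    (hmem : ∀ k : ℕ, ∃ a b c : ℝ,
      x (k + 1) = x k + a • gradient f (x k) + b • (x k - x 0)
        + c • (∑ i ∈ Finset.range (k + 1), ω i • gradient f (x i)))
    (hsubmin : ∀ (k : ℕ) (a b c : ℝ),
      f (x (k + 1)) ≤ f (x k + a • gradient f (x k) + b • (x k - x 0)
        + c • (∑ i ∈ Finset.range (k + 1), ω i • gradient f (x i))))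
    (R : ℝ) (hR : R = ‖x 0 - xstar‖) :
    ∀ k : ℕ, 1 ≤ k → f (x k) - f xstar ≤ 2 * L * R ^ 2 / (α ^ 2 * k ^ 2) := by
  intro k hk
  have hα0 : 0 < α := hα.1
  obtain ⟨m, rfl⟩ : ∃ m, k = m + 1 := ⟨k - 1, by omega⟩
  have hbound := IsSESOPSequence.two_mul_sq_mul_sq_mul_sub_le ⟨hmem, hsubmin⟩ hdiff hL hsmooth
    hα0 hwqc hω0 hωrec m
  have hωm : ((m : ℝ) + 1) / 2 ≤ ω m := by
    linarith [half_add_one_le_of_eq_half_add_sqrt hω0 hωrec m]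
  have hωm_pos : 0 < ω m := lt_of_lt_of_le (by positivity) hωm
  rw [← hR] at hbound
  calc f (x (m + 1)) - f xstar ≤ L * R ^ 2 / (2 * α ^ 2 * ω m ^ 2) := by
        rw [le_div_iff₀ (by positivity)]; linarith
    _ ≤ L * R ^ 2 / (2 * α ^ 2 * (((m : ℝ) + 1) / 2) ^ 2) := by
        gcongr
    _ = 2 * L * R ^ 2 / (α ^ 2 * ((m + 1 : ℕ) : ℝ) ^ 2) := by
        push_cast; field_simp

theorem sesop_convergence
    (n : ℕ) (f : EuclideanSpace ℝ (Fin n) → ℝ)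
    (hdiff : Differentiable ℝ f)
    (L : ℝ) (hL : 0 < L)
    (hsmooth : ∀ x y : EuclideanSpace ℝ (Fin n),
      ‖gradient f y - gradient f x‖ ≤ L * ‖y - x‖)
    (xstar : EuclideanSpace ℝ (Fin n))
    (hmin : ∀ x, f xstar ≤ f x)
    (α : ℝ) (hα : α ∈ Set.Ioc (0 : ℝ) 1)
    (hwqc : ∀ x, α * (f x - f xstar) ≤ ⟪gradient f x, x - xstar⟫)
    (ω : ℕ → ℝ)
    (hω0 : ω 0 = 1)
    (hωrec : ∀ k : ℕ, ω (k + 1) = 1 / 2 + Real.sqrt (1 / 4 + ω k ^ 2))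
    (x : ℕ → EuclideanSpace ℝ (Fin n))
    (hmem : ∀ k : ℕ, ∃ a b c : ℝ,
      x (k + 1) = x k + a • gradient f (x k) + b • (x k - x 0)
        + c • (∑ i ∈ Finset.range (k + 1), ω i • gradient f (x i)))
    (hsubmin : ∀ (k : ℕ) (a b c : ℝ),
      f (x (k + 1)) ≤ f (x k + a • gradient f (x k) + b • (x k - x 0)
        + c • (∑ i ∈ Finset.range (k + 1), ω i • gradient f (x i))))
    (R : ℝ) (hR : R = ‖x 0 - xstar‖) :
    ∀ k : ℕ, 1 ≤ k → f (x k) - f xstar ≤ 2 * L * R ^ 2 / (α ^ 2 * k ^ 2) :=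
  sesop_convergence_general n f hdiff L hL hsmooth xstar α hα hwqc ω hω0 hωrec x hmem hsubmin R hR
end
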